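/- For a 4×4 matrix A = (a_{i,j}), let R(A) = per(A_{{1,2},{3,4}})·per(A_{{3,4},{1,2}})/(a_{1,3}·a_{2,4}·a_{3,1}·a_{4,2}). Then for every ε > 0 there exists a totally positive 4×4 matrix A with |R(A) − 1| < ε, and for every ε > 0 there exists a totally positive 4×4 matrix A with |R(A) − 4| < ε. -/
import Mathlib


open Matrix BigOperators

/-- The permanent of a square real matrix. -/
def per {r : ℕ} (B : Matrix (Fin r) (Fin r) ℝ) : ℝ :=
  ∑ σ : Equiv.Perm (Fin r), ∏ i, B i (σ i)

/-- An `n × n` real matrix is totally positive if all its minors are positive. -/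
def TotallyPos {n : ℕ} (A : Matrix (Fin n) (Fin n) ℝ) : Prop :=
  ∀ (k : ℕ) (f g : Fin k → Fin n), StrictMono f → StrictMono g →
    0 < (A.submatrix f g).det

/-- The ratio `per(A_{12,34}) per(A_{34,12}) / (a₁₃ a₂₄ a₃₁ a₄₂)`. -/
noncomputable def R (A : Matrix (Fin 4) (Fin 4) ℝ) : ℝ :=
  per (A.submatrix ![0, 1] ![2, 3]) * per (A.submatrix ![2, 3] ![0, 1]) /
    (A 0 2 * A 1 3 * A 2 0 * A 3 1)

lemma per_two (B : Matrix (Fin 2) (Fin 2) ℝ) :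
    per B = B 0 0 * B 1 1 + B 0 1 * B 1 0 := by
  have h : (Finset.univ : Finset (Equiv.Perm (Fin 2))) =
      {Equiv.refl (Fin 2), Equiv.swap 0 1} := by decide
  rw [per, h, Finset.sum_insert (by decide), Finset.sum_singleton]
  simp [Fin.prod_univ_two]

/-- The matrix `(q^{ij})` (a Vandermonde matrix with nodes `q^i`) is totally
positive for `q > 1`. -/
lemma tp_q (q : ℝ) (hq : 1 < q) :
    TotallyPos (Matrix.of fun i j : Fin 4 => q ^ (i.val * j.val)) := by
  have hq0 : (0:ℝ) < q := lt_trans one_pos hq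
  intro k f g hf hg
  have hk : k ≤ 4 := by
    have := Fintype.card_le_of_injective f hf.injective
    simpa using this
  interval_cases k
  · simp [Matrix.det_fin_zero]
  · rw [Matrix.det_fin_one]
    simp only [Matrix.submatrix_apply, Matrix.of_apply]
    positivity
  · -- k = 2
    have hab : (f 0).val < (f 1).val := hf (by decide)
    have hde : (g 0).val < (g 1).val := hg (by decide)
    rw [Matrix.det_fin_two]
    simp only [Matrix.submatrix_apply, Matrix.of_apply]
    rw [← pow_add, ← pow_add, sub_pos]
    apply pow_lt_pow_right₀ hq
    nlinarith
  · -- k = 3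
    have hab : (f 0).val < (f 1).val := hf (by decide)
    have hbc : (f 1).val < (f 2).val := hf (by decide)
    have hde : (g 0).val < (g 1).val := hg (by decide)
    have heh : (g 1).val < (g 2).val := hg (by decide)
    have hh4 : (g 2).val < 4 := (g 2).isLt
    have hx : (0:ℝ) < q ^ (f 0).val := pow_pos hq0 _
    have hxy : q ^ (f 0).val < q ^ (f 1).val := pow_lt_pow_right₀ hq hab
    have hyz : q ^ (f 1).val < q ^ (f 2).val := pow_lt_pow_right₀ hq hbc
    set x := q ^ (f 0).val with hxdef
    set y := q ^ (f 1).val with hydef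
    set z := q ^ (f 2).val with hzdef
    have hy : (0:ℝ) < y := lt_trans hx hxy
    have hz : (0:ℝ) < z := lt_trans hy hyz
    have hxz : x < z := lt_trans hxy hyz
    obtain ⟨d, hd⟩ : ∃ d, (g 0).val = d := ⟨_, rfl⟩
    obtain ⟨e, he⟩ : ∃ e, (g 1).val = e := ⟨_, rfl⟩
    obtain ⟨h, hh⟩ : ∃ h, (g 2).val = h := ⟨_, rfl⟩
    have h1 : d < e := by omega
    have h2 : e < h := by omega
    have h3 : h < 4 := by omega
    rw [Matrix.det_fin_three]
    simp only [Matrix.submatrix_apply, Matrix.of_apply, hd, he, hh]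
    interval_cases h <;> interval_cases e <;> interval_cases d <;>
      simp only [Nat.mul_zero, Nat.mul_one, pow_zero, pow_mul,
        ← hxdef, ← hydef, ← hzdef] <;>
      nlinarith [mul_pos (mul_pos (sub_pos.2 hxy) (sub_pos.2 hxz)) (sub_pos.2 hyz),
        mul_pos (mul_pos (mul_pos (sub_pos.2 hxy) (sub_pos.2 hxz)) (sub_pos.2 hyz))
          (by linarith : (0:ℝ) < x + y + z),
        mul_pos (mul_pos (mul_pos (sub_pos.2 hxy) (sub_pos.2 hxz)) (sub_pos.2 hyz))
          (by positivity : (0:ℝ) < x*y + x*z + y*z),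
        mul_pos (mul_pos (mul_pos (sub_pos.2 hxy) (sub_pos.2 hxz)) (sub_pos.2 hyz))
          (by positivity : (0:ℝ) < x*y*z)]
  · -- k = 4
    have hf4 : ∀ i : Fin 4, (f i).val = i.val := by
      have h01 : (f 0).val < (f 1).val := hf (by decide)
      have h12 : (f 1).val < (f 2).val := hf (by decide)
      have h23 : (f 2).val < (f 3).val := hf (by decide)
      have h3 : (f 3).val < 4 := (f 3).isLt
      intro i; fin_cases i <;> simp <;> omega
    have hg4 : ∀ i : Fin 4, (g i).val = i.val := by
      have h01 : (g 0).val < (g 1).val := hg (by decide)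
      have h12 : (g 1).val < (g 2).val := hg (by decide)
      have h23 : (g 2).val < (g 3).val := hg (by decide)
      have h3 : (g 3).val < 4 := (g 3).isLt
      intro i; fin_cases i <;> simp <;> omega
    have heq : (Matrix.of fun i j : Fin 4 => q ^ (i.val * j.val)).submatrix f g
        = Matrix.vandermonde (fun i : Fin 4 => q ^ (i.val)) := by
      ext i j
      simp only [Matrix.submatrix_apply, Matrix.of_apply, Matrix.vandermonde_apply,
        hf4, hg4, ← pow_mul]
    rw [heq, Matrix.det_vandermonde]
    apply Finset.prod_pos
    intro i _
    apply Finset.prod_pos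
    intro j hj
    rw [sub_pos]
    exact pow_lt_pow_right₀ hq (Finset.mem_Ioi.mp hj : i < j)

lemma R_val (q : ℝ) :
    R (Matrix.of fun i j : Fin 4 => q ^ (i.val * j.val)) = (q^3 + q^2)^2 / q^6 := by
  rw [R, per_two, per_two]
  simp only [Matrix.submatrix_apply, Matrix.of_apply, Matrix.cons_val_zero,
    Matrix.cons_val_one, Matrix.head_cons]
  norm_num [show ((0:Fin 4):ℕ) = 0 from rfl, show ((1:Fin 4):ℕ) = 1 from rfl,
    show ((2:Fin 4):ℕ) = 2 from rfl, show ((3:Fin 4):ℕ) = 3 from rfl]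
  ring

theorem stmt14 :
    (∀ ε : ℝ, 0 < ε →
      ∃ A : Matrix (Fin 4) (Fin 4) ℝ, TotallyPos A ∧ |R A - 1| < ε) ∧
    (∀ ε : ℝ, 0 < ε →
      ∃ A : Matrix (Fin 4) (Fin 4) ℝ, TotallyPos A ∧ |R A - 4| < ε) := by
  constructor
  · intro ε hε
    set q : ℝ := 2 + 4/ε with hqdef
    have h4ε : (0:ℝ) < 4/ε := by positivity
    have hq1 : (1:ℝ) < q := by simp only [hqdef]; linarith
    have hq0 : (0:ℝ) < q := lt_trans one_pos hq1
    refine ⟨Matrix.of fun i j : Fin 4 => q ^ (i.val * j.val), tp_q q hq1, ?_⟩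
    rw [R_val]
    have hkey : (q^3 + q^2)^2 / q^6 - 1 = (2*q + 1)/q^2 := by
      field_simp
      ring
    rw [hkey, abs_of_pos (by positivity)]
    rw [div_lt_iff₀ (by positivity)]
    have hεq : ε * q = 2*ε + 4 := by
      rw [hqdef]; field_simp
    have h4q : 4 ≤ ε * q := by nlinarith
    have h5 : 4 * q ≤ ε * q * q := by nlinarith
    have hq2 : (2:ℝ) ≤ q := by rw [hqdef]; linarith
    nlinarith
  · intro ε hε
    set q : ℝ := 1 + min (ε/8) 1 with hqdef
    have hmin : (0:ℝ) < min (ε/8) 1 := lt_min (by positivity) one_pos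
    have hq1 : (1:ℝ) < q := by simp only [hqdef]; linarith
    have hq0 : (0:ℝ) < q := lt_trans one_pos hq1
    have hq2 : q ≤ 2 := by
      have : min (ε/8) 1 ≤ 1 := min_le_right _ _
      simp only [hqdef]; linarith
    have hqε : q - 1 ≤ ε/8 := by
      have : min (ε/8) 1 ≤ ε/8 := min_le_left _ _
      simp only [hqdef]; linarith
    refine ⟨Matrix.of fun i j : Fin 4 => q ^ (i.val * j.val), tp_q q hq1, ?_⟩
    rw [R_val]
    have hkey : (q^3 + q^2)^2 / q^6 - 4 = -((q - 1)*(3*q + 1)/q^2) := by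
      field_simp
      ring
    rw [hkey, abs_neg, abs_of_pos (by
      apply div_pos (mul_pos (by linarith) (by linarith)) (by positivity))]
    have hle : (q - 1)*(3*q + 1)/q^2 ≤ (q - 1)*(3*q + 1) := by
      apply div_le_self (by nlinarith) (by nlinarith)
    have hb : 3*q + 1 ≤ 7 := by linarith
    have : (q - 1)*(3*q + 1) ≤ (ε/8) * 7 :=
      mul_le_mul hqε hb (by linarith) (by positivity)
    linarith
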